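/- arXiv:2204.13619 — 2 statements merged into one kernel-verified Lean document; each statement's English description precedes it below -/
import Mathlib

section
/- The global regularizer φ(θ) = (1/2) Σ_{j=1}^k α_j Σ_{i∈I_j} γ_i ‖θ_i − θ̄‖² is convex as a function of θ = (θ_1,…,θ_n) ∈ (ℝ^d)^n, and it is (max_{j=1,…,k} max_{i∈I_j} α_j γ_i)-smooth, i.e., its gradient with respect to θ is Lipschitz with constant max_{j=1,…,k} max_{i∈I_j} α_j γ_i. -/
/-!
With weights `w i = α (c i) * γ i` the regularizer is `φ θ = ⟪D θ, θ⟫ / 2` for the deviation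
operator `(D θ)_i = w_i (θ_i - θ̄)`. Since `Σ w_i (θ_i - θ̄) = 0`, one has
`⟪D x, y⟫ = Σ w_i ⟪x_i - x̄, y_i - ȳ⟫`, so `D` is symmetric and positive: `φ` is a convex quadratic
whose gradient is `D`. Finally `‖D x‖² ≤ L Σ w_i ‖x_i - x̄‖² ≤ L Σ w_i ‖x_i‖² ≤ L² ‖x‖²` for
`L = max w`, the middle step because the weighted mean minimises the weighted second moment.
-/

open scoped BigOperators

noncomputable section

/-- `E d` is the Euclidean space ℝ^d. -/
abbrev E (d : ℕ) := EuclideanSpace ℝ (Fin d)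

/-- `X n d = (ℝ^d)^n` with the ℓ2 product (Euclidean) norm. -/
abbrev X (n d : ℕ) := PiLp 2 (fun _ : Fin n => E d)

/-- The cluster `I_j` of clients assigned to cluster `j` by the assignment map `c`. -/
def clSet {n k : ℕ} (c : Fin n → Fin k) (j : Fin k) : Finset (Fin n) :=
  Finset.univ.filter fun i => c i = j

/-- The global average θ̄ = (Σ_j Σ_{i∈I_j} α_j γ_i θ_i)/(Σ_j Σ_{i∈I_j} α_j γ_i). -/
def glAvg {n k d : ℕ} (c : Fin n → Fin k) (γ : Fin n → ℝ) (α : Fin k → ℝ)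
    (θ : X n d) : E d :=
  (∑ j, ∑ i ∈ clSet c j, α j * γ i)⁻¹ • ∑ j, ∑ i ∈ clSet c j, (α j * γ i) • θ i

open scoped RealInnerProductSpace
open Finset

section InnerSelf

variable {F : Type*} [NormedAddCommGroup F] [InnerProductSpace ℝ F]

theorem hasGradientAt_inner_self_div_two [CompleteSpace F] {T : F →L[ℝ] F} (hT : T.IsSymmetric)
    (x : F) : HasGradientAt (fun y => ⟪T y, y⟫ / 2) (T x) x := by
  rw [hasGradientAt_iff_hasFDerivAt]
  have hq := (T.hasFDerivAt.inner ℝ (hasFDerivAt_id x)).mul_const (2⁻¹ : ℝ)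
  simp only [id, ← div_eq_mul_inv] at hq
  refine hq.congr_fderiv (ContinuousLinearMap.ext fun h => ?_)
  simp only [smul_apply, ContinuousLinearMap.comp_apply, ContinuousLinearMap.prod_apply,
    ContinuousLinearMap.id_apply, fderivInnerCLM_apply, smul_eq_mul,
    InnerProductSpace.toDual_apply_apply]
  rw [show ⟪T h, x⟫ = ⟪T x, h⟫ from (hT h x).trans (real_inner_comm _ _)]
  ring

theorem convexOn_inner_self_div_two {T : F →ₗ[ℝ] F} (hT : ∀ x, 0 ≤ ⟪T x, x⟫) :
    ConvexOn ℝ Set.univ (fun y => ⟪T y, y⟫ / 2) := by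
  refine ⟨convex_univ, fun x _ y _ a b ha hb hab => ?_⟩
  have key := mul_nonneg (mul_nonneg ha hb) (hT (x - y))
  obtain rfl : b = 1 - a := by linarith
  simp only [map_add, map_sub, map_smul, inner_add_left, inner_add_right, inner_sub_left,
    inner_sub_right, real_inner_smul_left, real_inner_smul_right, smul_eq_mul] at key ⊢
  nlinarith

end InnerSelf

section WeightedDeviation

variable {ι F : Type*} [Fintype ι] [NormedAddCommGroup F] [InnerProductSpace ℝ F]
  (w : ι → ℝ)

def weightedMean : PiLp 2 (fun _ : ι => F) →L[ℝ] F :=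
  (∑ i, w i)⁻¹ • ∑ i, w i • PiLp.proj (𝕜 := ℝ) 2 (fun _ : ι => F) i

def weightedDeviation : PiLp 2 (fun _ : ι => F) →L[ℝ] PiLp 2 (fun _ : ι => F) :=
  (PiLp.continuousLinearEquiv 2 ℝ (fun _ : ι => F)).symm.toContinuousLinearMap.comp
    (ContinuousLinearMap.pi fun i => w i • (PiLp.proj 2 (fun _ : ι => F) i - weightedMean w))

variable {w}

theorem weightedMean_apply (θ : PiLp 2 (fun _ : ι => F)) :
    weightedMean w θ = (∑ i, w i)⁻¹ • ∑ i, w i • θ i := by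
  simp [weightedMean]

theorem weightedDeviation_apply (θ : PiLp 2 (fun _ : ι => F)) (i : ι) :
    weightedDeviation w θ i = w i • (θ i - weightedMean w θ) := by
  simp [weightedDeviation]

theorem sum_smul_sub_weightedMean (hW : ∑ i, w i ≠ 0) (θ : PiLp 2 (fun _ : ι => F)) :
    ∑ i, w i • (θ i - weightedMean w θ) = 0 := by
  rw [sum_congr rfl fun i _ => smul_sub (w i) _ _, sum_sub_distrib, ← sum_smul,
    weightedMean_apply, smul_smul, mul_inv_cancel₀ hW, one_smul, sub_self]

theorem sum_mul_inner_sub_weightedMean (hW : ∑ i, w i ≠ 0) (θ : PiLp 2 (fun _ : ι => F))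
    (v : F) : ∑ i, w i * ⟪θ i - weightedMean w θ, v⟫ = 0 := by
  simp_rw [← real_inner_smul_left, ← sum_inner, sum_smul_sub_weightedMean hW, inner_zero_left]

theorem inner_weightedDeviation (hW : ∑ i, w i ≠ 0) (x y : PiLp 2 (fun _ : ι => F)) :
    ⟪weightedDeviation w x, y⟫ =
      ∑ i, w i * ⟪x i - weightedMean w x, y i - weightedMean w y⟫ := by
  simp_rw [PiLp.inner_apply, weightedDeviation_apply, real_inner_smul_left, inner_sub_right,
    mul_sub, sum_sub_distrib, sum_mul_inner_sub_weightedMean hW, sub_zero]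

theorem isSymmetric_weightedDeviation (hW : ∑ i, w i ≠ 0) :
    (weightedDeviation w : PiLp 2 (fun _ : ι => F) →L[ℝ] _).IsSymmetric := fun x y => by
  change ⟪weightedDeviation w x, y⟫ = ⟪x, weightedDeviation w y⟫
  rw [real_inner_comm (weightedDeviation w y), inner_weightedDeviation hW,
    inner_weightedDeviation hW]
  exact sum_congr rfl fun i _ => by rw [real_inner_comm]

theorem inner_weightedDeviation_self (hW : ∑ i, w i ≠ 0) (x : PiLp 2 (fun _ : ι => F)) :
    ⟪weightedDeviation w x, x⟫ = ∑ i, w i * ‖x i - weightedMean w x‖ ^ 2 := by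
  simp_rw [inner_weightedDeviation hW, real_inner_self_eq_norm_sq]

theorem inner_weightedDeviation_self_nonneg (hw : ∀ i, 0 ≤ w i) (hW : ∑ i, w i ≠ 0)
    (x : PiLp 2 (fun _ : ι => F)) : 0 ≤ ⟪weightedDeviation w x, x⟫ := by
  rw [inner_weightedDeviation_self hW]
  exact sum_nonneg fun i _ => mul_nonneg (hw i) (sq_nonneg _)

theorem sum_mul_norm_sub_weightedMean_sq_le (hw : ∀ i, 0 ≤ w i) (hW : ∑ i, w i ≠ 0)
    (x : PiLp 2 (fun _ : ι => F)) :
    ∑ i, w i * ‖x i - weightedMean w x‖ ^ 2 ≤ ∑ i, w i * ‖x i‖ ^ 2 := by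
  set m := weightedMean w x
  have hsplit : ∀ i, w i * ‖x i‖ ^ 2 =
      w i * ‖x i - m‖ ^ 2 + 2 * (w i * ⟪x i - m, m⟫) + w i * ‖m‖ ^ 2 := fun i => by
    have h := norm_add_sq_real (x i - m) m
    rw [sub_add_cancel] at h
    rw [h]
    ring
  rw [sum_congr rfl fun i _ => hsplit i, sum_add_distrib, sum_add_distrib, ← mul_sum,
    sum_mul_inner_sub_weightedMean hW, ← sum_mul]
  nlinarith [sum_nonneg fun i (_ : i ∈ univ) => hw i, sq_nonneg ‖m‖]

theorem norm_weightedDeviation_le {L : ℝ} (hw : ∀ i, 0 ≤ w i) (hW : ∑ i, w i ≠ 0)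
    (hL : ∀ i, w i ≤ L) (x : PiLp 2 (fun _ : ι => F)) :
    ‖weightedDeviation w x‖ ≤ L * ‖x‖ := by
  obtain ⟨i₀, -, -⟩ := exists_ne_zero_of_sum_ne_zero hW
  have hL₀ : 0 ≤ L := (hw i₀).trans (hL i₀)
  refine le_of_sq_le_sq ?_ (by positivity)
  calc ‖weightedDeviation w x‖ ^ 2 = ∑ i, w i ^ 2 * ‖x i - weightedMean w x‖ ^ 2 := by
        simp_rw [PiLp.norm_sq_eq_of_L2, weightedDeviation_apply, norm_smul, mul_pow,
          Real.norm_eq_abs, sq_abs]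
    _ ≤ L * ∑ i, w i * ‖x i - weightedMean w x‖ ^ 2 := by
        rw [mul_sum]
        refine sum_le_sum fun i _ => ?_
        have hwL := mul_le_mul_of_nonneg_right (hL i) (hw i)
        nlinarith [mul_nonneg (sub_nonneg.2 hwL) (sq_nonneg ‖x i - weightedMean w x‖)]
    _ ≤ L * ∑ i, w i * ‖x i‖ ^ 2 :=
        mul_le_mul_of_nonneg_left (sum_mul_norm_sub_weightedMean_sq_le hw hW x) hL₀
    _ ≤ L * ∑ i, L * ‖x i‖ ^ 2 := by
        gcongr with i
        exact hL i
    _ = (L * ‖x‖) ^ 2 := by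
        rw [← mul_sum, mul_pow, PiLp.norm_sq_eq_of_L2]
        ring

end WeightedDeviation

section Clusters

variable {n k : ℕ}

theorem sum_clSet {M : Type*} [AddCommMonoid M] (c : Fin n → Fin k) (f : Fin k → Fin n → M) :
    ∑ j, ∑ i ∈ clSet c j, f j i = ∑ i, f (c i) i := by
  rw [← sum_fiberwise univ c fun i => f (c i) i]
  exact sum_congr rfl fun j _ => sum_congr rfl fun i hi => by rw [(mem_filter.1 hi).2]

theorem glAvg_eq_weightedMean {d : ℕ} (c : Fin n → Fin k) (γ : Fin n → ℝ) (α : Fin k → ℝ)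
    (θ : X n d) : glAvg c γ α θ = weightedMean (fun i => α (c i) * γ i) θ := by
  rw [glAvg, weightedMean_apply, sum_clSet c fun j i => α j * γ i,
    sum_clSet c fun j i => (α j * γ i) • θ i]

theorem le_sup'_sup'_clSet {β : Type*} [SemilatticeSup β] (c : Fin n → Fin k)
    (hc : ∀ j, (clSet c j).Nonempty) (H : (univ : Finset (Fin k)).Nonempty)
    (f : Fin k → Fin n → β) (i : Fin n) :
    f (c i) i ≤ univ.sup' H fun j => (clSet c j).sup' (hc j) (f j) :=
  le_sup'_of_le _ (mem_univ (c i)) (le_sup' (f (c i)) (by simp [clSet]))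

end Clusters

/-- the global regularizer φ(θ) = (1/2) Σ_j α_j Σ_{i∈I_j} γ_i ‖θ_i − θ̄‖²
is convex as a function of θ ∈ (ℝ^d)^n and its gradient is Lipschitz with constant
max_j max_{i∈I_j} α_j γ_i. -/
theorem phi_convex_smooth {n k d : ℕ} (hk : 0 < k)
    (c : Fin n → Fin k) (hc : ∀ j, (clSet c j).Nonempty)
    (γ : Fin n → ℝ) (hγ : ∀ i, 0 < γ i)
    (α : Fin k → ℝ) (hα : ∀ j, α j ∈ Set.Ioc (0 : ℝ) 1)
    (φ : X n d → ℝ)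
    (hφ : ∀ θ, φ θ = 1/2 * ∑ j, α j * ∑ i ∈ clSet c j, γ i * ‖θ i - glAvg c γ α θ‖ ^ 2) :
    ConvexOn ℝ Set.univ φ ∧
    ∀ θ θ' : X n d, ‖gradient φ θ - gradient φ θ'‖
      ≤ (Finset.univ.sup' (Finset.univ_nonempty_iff.mpr ⟨⟨0, hk⟩⟩)
          fun j => (clSet c j).sup' (hc j) fun i => α j * γ i) * ‖θ - θ'‖ := by
  set w : Fin n → ℝ := fun i => α (c i) * γ i
  have hw : ∀ i, 0 < w i := fun i => mul_pos (hα (c i)).1 (hγ i)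
  have hW : ∑ i, w i ≠ 0 := by
    obtain ⟨i, -⟩ := hc ⟨0, hk⟩
    exact (sum_pos (fun i _ => hw i) ⟨i, mem_univ i⟩).ne'
  have hφD : φ = fun θ => ⟪weightedDeviation w θ, θ⟫ / 2 := by
    funext θ
    rw [hφ, inner_weightedDeviation_self hW, one_div_mul_eq_div]
    simp_rw [glAvg_eq_weightedMean, mul_sum]
    rw [sum_clSet c fun j i => α j * (γ i * ‖θ i - weightedMean w θ‖ ^ 2)]
    simp only [w, mul_assoc]
  have hgrad : ∀ θ, gradient φ θ = weightedDeviation w θ := fun θ =>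
    hφD ▸ (hasGradientAt_inner_self_div_two (isSymmetric_weightedDeviation hW) θ).gradient
  refine ⟨hφD ▸ convexOn_inner_self_div_two (inner_weightedDeviation_self_nonneg (hw · |>.le) hW),
    fun θ θ' => ?_⟩
  rw [hgrad, hgrad, ← map_sub]
  exact norm_weightedDeviation_le (hw · |>.le) hW (le_sup'_sup'_clSet c hc _ fun j i => α j * γ i) _
end
end

section
/- Suppose each f_i is μ-strongly convex and L-smooth, τ_j = p_0/(p_0 + 2(1−p_0)p_j) for each j, and let θ* be the unique minimizer of F. Define 𝓛 = max{ (2/p_0) max_{j} max_{i∈I_j} α_j γ_i , max_{j} [2(1−α_j) max_{i∈I_j} γ_i / (p_0 + 2(1−p_0)p_j)] , (L/(1−p_0)) max_{j} 1/(1−p_j) }. Then for all θ ∈ (ℝ^d)^n, the expectation over (ξ_0,…,ξ_k) satisfies E‖G(θ) − G(θ*)‖² ≤ 2𝓛 (F(θ) − F(θ*)). -/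
open scoped BigOperators

noncomputable section

/-- The weighted cluster average θ̄_j = (Σ_{i∈I_j} γ_i θ_i)/(Σ_{i∈I_j} γ_i). -/
def clAvg {n k d : ℕ} (c : Fin n → Fin k) (γ : Fin n → ℝ) (j : Fin k)
    (θ : X n d) : E d :=
  (∑ i ∈ clSet c j, γ i)⁻¹ • ∑ i ∈ clSet c j, γ i • θ i

/-- The within-cluster regularizer ψ_j(θ) = (1/2) Σ_{i∈I_j} γ_i ‖θ_i − θ̄_j‖². -/
def psi {n k d : ℕ} (c : Fin n → Fin k) (γ : Fin n → ℝ) (j : Fin k) (θ : X n d) : ℝ :=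
  1/2 * ∑ i ∈ clSet c j, γ i * ‖θ i - clAvg c γ j θ‖ ^ 2

/-- The global regularizer φ(θ) = (1/2) Σ_j α_j Σ_{i∈I_j} γ_i ‖θ_i − θ̄‖². -/
def phi {n k d : ℕ} (c : Fin n → Fin k) (γ : Fin n → ℝ) (α : Fin k → ℝ)
    (θ : X n d) : ℝ :=
  1/2 * ∑ j, α j * ∑ i ∈ clSet c j, γ i * ‖θ i - glAvg c γ α θ‖ ^ 2

/-- The cluster loss F_j(θ) = Σ_{i∈I_j} f_i(θ_i). -/
def clLoss {n k d : ℕ} (c : Fin n → Fin k) (f : Fin n → E d → ℝ) (j : Fin k)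
    (θ : X n d) : ℝ :=
  ∑ i ∈ clSet c j, f i (θ i)

/-- An outcome of the Async-L2GD randomness: the Bernoulli draws (ξ_0, ξ_1, …, ξ_k). -/
abbrev Outcome (k : ℕ) := Bool × (Fin k → Bool)

/-- The probability of an outcome (ξ_0, ξ_1, …, ξ_k) of independent Bernoulli draws
with parameters (p_0, p_1, …, p_k). -/
def wt {k : ℕ} (p0 : ℝ) (p : Fin k → ℝ) (ω : Outcome k) : ℝ :=
  (if ω.1 then p0 else 1 - p0) * ∏ j, (if ω.2 j then p j else 1 - p j)

/-- The Async-L2GD stochastic gradient oracle G(θ) for the outcome ω = (ξ_0, ξ). -/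
def Orc {n k d : ℕ} (c : Fin n → Fin k) (γ : Fin n → ℝ) (α : Fin k → ℝ)
    (τ : Fin k → ℝ) (p0 : ℝ) (p : Fin k → ℝ) (f : Fin n → E d → ℝ)
    (θ : X n d) (ω : Outcome k) : X n d :=
  WithLp.toLp 2 fun i =>
    if ω.1 then
      (γ i * α (c i) / p0) • (θ i - glAvg c γ α θ)
        + (γ i * τ (c i) * (1 - α (c i)) / p0) • (θ i - clAvg c γ (c i) θ)
    else if ω.2 (c i) then
      (γ i * (1 - τ (c i)) * (1 - α (c i)) / ((1 - p0) * p (c i)))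
        • (θ i - clAvg c γ (c i) θ)
    else
      (1 / ((1 - p0) * (1 - p (c i)))) • gradient (f i) (θ i)


/-- The full objective F(θ) = Σ_i f_i(θ_i) + Σ_j (1−α_j) ψ_j(θ) + φ(θ). -/
def objF {n k d : ℕ} (c : Fin n → Fin k) (γ : Fin n → ℝ) (α : Fin k → ℝ)
    (f : Fin n → E d → ℝ) (θ : X n d) : ℝ :=
  (∑ i, f i (θ i)) + (∑ j, (1 - α j) * psi c γ j θ) + phi c γ α θ

/-- The expected-smoothness constant 𝓛. -/
def esL {n k : ℕ} (hk : 0 < k) (c : Fin n → Fin k) (hc : ∀ j, (clSet c j).Nonempty)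
    (γ : Fin n → ℝ) (α : Fin k → ℝ) (L p0 : ℝ) (p : Fin k → ℝ) : ℝ :=
  max (max
    ((2 / p0) * Finset.univ.sup' (Finset.univ_nonempty_iff.mpr ⟨⟨0, hk⟩⟩)
      fun j => (clSet c j).sup' (hc j) fun i => α j * γ i)
    (Finset.univ.sup' (Finset.univ_nonempty_iff.mpr ⟨⟨0, hk⟩⟩)
      fun j => 2 * (1 - α j) * ((clSet c j).sup' (hc j) γ) / (p0 + 2 * (1 - p0) * p j)))
    ((L / (1 - p0)) * Finset.univ.sup' (Finset.univ_nonempty_iff.mpr ⟨⟨0, hk⟩⟩)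
      fun j => 1 / (1 - p j))

/-!
Write `Δ = θ - θ*`. Since the averaging maps are linear, client `i`'s block of `G(θ) - G(θ*)`
is `(γ α / p₀) (Δ_i - Δ̄) + (γ τ (1 - α) / p₀) (Δ_i - Δ̄_j)`, a multiple of `Δ_i - Δ̄_j`, or a
multiple of `∇f_i(θ_i) - ∇f_i(θ*_i)`, according as `ξ₀ = 1`, `ξ_j = 1` or neither; so the
expectation is a sum over clients of three weighted squared norms. After
`‖a + b‖² ≤ 2‖a‖² + 2‖b‖²`, the prescribed `τ_j` makes the two coefficients of `‖Δ_i - Δ̄_j‖²`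
add up to exactly `2 γ_i² (1 - α_j)² / (p₀ + 2 (1 - p₀) p_j)`, and co-coercivity bounds the
gradient term by `2L` times the Bregman divergence `D_{f_i}(θ_i, θ*_i)`.

On the other side the regularizer `R = Σ_j (1 - α_j) ψ_j + φ` is quadratic, so the first-order
optimality of `θ*` along the line through `θ` gives the exact identity
`F(θ) - F(θ*) = Σ_i D_{f_i}(θ_i, θ*_i) + R(Δ)`, and
`2 R(Δ) = Σ_i γ_i (α_j ‖Δ_i - Δ̄‖² + (1 - α_j) ‖Δ_i - Δ̄_j‖²)` matches the client sum term by term.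
-/

open scoped RealInnerProductSpace

section ConvexAnalysis

variable {F : Type*} [NormedAddCommGroup F] [InnerProductSpace ℝ F] [CompleteSpace F]

def bregman (f : F → ℝ) (x y : F) : ℝ :=
  f x - f y - ⟪gradient f y, x - y⟫

lemma hasDerivAt_comp_line {f : F → ℝ} (hf : Differentiable ℝ f) (y v : F) (t : ℝ) :
    HasDerivAt (fun s : ℝ => f (y + s • v)) ⟪gradient f (y + t • v), v⟫ t := by
  have hline : HasDerivAt (fun s : ℝ => y + s • v) v t := by
    simpa using ((hasDerivAt_id t).smul_const v).const_add y
  simpa [Function.comp_def] using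
    (hasGradientAt_iff_hasFDerivAt.mp (hf _).hasGradientAt).comp_hasDerivAt t hline

lemma ConvexOn.bregman_nonneg {f : F → ℝ} (hf : Differentiable ℝ f)
    (hc : ConvexOn ℝ Set.univ f) (x y : F) : 0 ≤ bregman f x y := by
  set g : ℝ → ℝ := fun t => f (y + t • (x - y))
  have hg : ConvexOn ℝ Set.univ g := by
    simpa [g, Function.comp_def, AffineMap.lineMap_apply, add_comm] using
      hc.comp_affineMap (AffineMap.lineMap y x : ℝ →ᵃ[ℝ] F)
  have hd : HasDerivAt g ⟪gradient f y, x - y⟫ 0 := by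
    simpa only [zero_smul, add_zero] using hasDerivAt_comp_line hf y (x - y) 0
  have hslope := hg.le_slope_of_hasDerivAt (Set.mem_univ 0) (Set.mem_univ 1) zero_lt_one hd
  simp only [g, slope_def_field, one_smul, zero_smul, add_zero, add_sub_cancel, sub_zero,
    div_one] at hslope
  unfold bregman
  linarith

lemma bregman_le_of_lipschitz_gradient {f : F → ℝ} (hf : Differentiable ℝ f) {L : ℝ}
    (hsm : ∀ x y, ‖gradient f x - gradient f y‖ ≤ L * ‖x - y‖) (x y : F) :
    bregman f x y ≤ L / 2 * ‖x - y‖ ^ 2 := by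
  set v := x - y
  set h : ℝ → ℝ := fun t => f (y + t • v) - t * ⟪gradient f y, v⟫ - L / 2 * t ^ 2 * ‖v‖ ^ 2
  have hderiv : ∀ t, HasDerivAt h
      (⟪gradient f (y + t • v) - gradient f y, v⟫ - L * t * ‖v‖ ^ 2) t := by
    intro t
    have := (((hasDerivAt_comp_line hf y v t).sub ((hasDerivAt_id t).mul_const
      ⟪gradient f y, v⟫)).sub (((hasDerivAt_pow 2 t).const_mul (L / 2)).mul_const (‖v‖ ^ 2)))
    refine this.congr_deriv ?_
    rw [inner_sub_left, Nat.cast_ofNat, show 2 - 1 = 1 from rfl]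
    ring
  have hanti : AntitoneOn h (Set.Ici 0) := by
    refine antitoneOn_of_hasDerivWithinAt_nonpos (convex_Ici 0)
      (fun t _ => (hderiv t).continuousAt.continuousWithinAt)
      (fun t _ => (hderiv t).hasDerivWithinAt) fun t ht => ?_
    rw [interior_Ici, Set.mem_Ioi] at ht
    have hlip : ‖gradient f (y + t • v) - gradient f y‖ ≤ L * (t * ‖v‖) := by
      simpa [norm_smul, abs_of_pos ht] using hsm (y + t • v) y
    nlinarith [real_inner_le_norm (gradient f (y + t • v) - gradient f y) v, norm_nonneg v]
  have h10 := hanti (Set.mem_Ici.mpr le_rfl) (Set.mem_Ici.mpr zero_le_one) zero_le_one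
  simp only [h, v, one_smul, zero_smul, add_zero, one_mul, zero_mul, one_pow, mul_one,
    add_sub_cancel, sub_zero, ne_eq, OfNat.ofNat_ne_zero, not_false_eq_true, zero_pow,
    mul_zero] at h10
  unfold bregman
  linarith

lemma ConvexOn.norm_sub_gradient_sq_le_bregman {f : F → ℝ} (hf : Differentiable ℝ f)
    (hc : ConvexOn ℝ Set.univ f) {L : ℝ} (hL : 0 < L)
    (hsm : ∀ x y, ‖gradient f x - gradient f y‖ ≤ L * ‖x - y‖) (x y : F) :
    ‖gradient f x - gradient f y‖ ^ 2 ≤ 2 * L * bregman f x y := by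
  set g := gradient f x - gradient f y
  -- Apply convexity between `w` and `y`, and the descent lemma between `w` and `x`.
  set w := x - L⁻¹ • g
  have h1 := hc.bregman_nonneg hf w y
  have h2 := bregman_le_of_lipschitz_gradient hf hsm w x
  have hwx : w - x = -(L⁻¹ • g) := by simp [w]
  have hwy : w - y = (x - y) - L⁻¹ • g := by simp only [w]; abel
  unfold bregman at *
  rw [hwx, norm_neg, norm_smul, inner_neg_right, real_inner_smul_right] at h2
  rw [hwy, inner_sub_right, real_inner_smul_right] at h1
  have hg : ⟪gradient f x, g⟫ - ⟪gradient f y, g⟫ = ‖g‖ ^ 2 := by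
    rw [← inner_sub_left, real_inner_self_eq_norm_sq]
  rw [Real.norm_eq_abs, abs_inv, abs_of_pos hL, mul_pow] at h2
  have key : ‖g‖ ^ 2 / (2 * L) ≤ f x - f y - ⟪gradient f y, x - y⟫ := by
    have : L⁻¹ * ‖g‖ ^ 2 - L / 2 * (L⁻¹ ^ 2 * ‖g‖ ^ 2) = ‖g‖ ^ 2 / (2 * L) := by
      field_simp; ring
    have e : L⁻¹ * ⟪gradient f x, g⟫ - L⁻¹ * ⟪gradient f y, g⟫ = L⁻¹ * ‖g‖ ^ 2 := by
      rw [← mul_sub, hg]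
    rw [← this]
    linarith
  rwa [div_le_iff₀ (by positivity), mul_comm] at key

end ConvexAnalysis

namespace Finset

variable {ι V : Type*}

lemma centerMass_add_smul [AddCommGroup V] [Module ℝ V] (s : Finset ι) (w : ι → ℝ)
    (x y : ι → V) (t : ℝ) :
    s.centerMass w (x + t • y) = s.centerMass w x + t • s.centerMass w y := by
  simp only [centerMass, Pi.add_apply, Pi.smul_apply, smul_add, sum_add_distrib, smul_comm _ t,
    ← smul_sum]

lemma centerMass_sub [AddCommGroup V] [Module ℝ V] (s : Finset ι) (w : ι → ℝ) (x y : ι → V) :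
    s.centerMass w (x - y) = s.centerMass w x - s.centerMass w y := by
  simp only [centerMass, Pi.sub_apply, smul_sub, sum_sub_distrib]

lemma sum_smul_sub_centerMass [AddCommGroup V] [Module ℝ V] {s : Finset ι} {w : ι → ℝ}
    (hw : ∑ i ∈ s, w i ≠ 0) (z : ι → V) :
    ∑ i ∈ s, w i • (z i - s.centerMass w z) = 0 := by
  simp only [smul_sub, sum_sub_distrib, ← sum_smul, centerMass, smul_inv_smul₀ hw, sub_self]

variable [NormedAddCommGroup V] [InnerProductSpace ℝ V]

def weightedVar (s : Finset ι) (w : ι → ℝ) (z : ι → V) : ℝ :=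
  ∑ i ∈ s, w i * ‖z i - s.centerMass w z‖ ^ 2

lemma weightedVar_add_smul {s : Finset ι} {w : ι → ℝ} (hw : ∑ i ∈ s, w i ≠ 0)
    (x y : ι → V) (t : ℝ) :
    s.weightedVar w (x + t • y) = s.weightedVar w x
      + t * (2 * ∑ i ∈ s, w i * ⟪x i - s.centerMass w x, y i⟫) + t ^ 2 * s.weightedVar w y := by
  set a := fun i => x i - s.centerMass w x
  -- The deviations `a i` have weighted sum zero, so they are orthogonal to any constant.
  have hcross : ∑ i ∈ s, w i * ⟪a i, y i - s.centerMass w y⟫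
      = ∑ i ∈ s, w i * ⟪a i, y i⟫ := by
    have h0 : ∑ i ∈ s, w i * ⟪a i, s.centerMass w y⟫ = 0 := by
      simp only [← real_inner_smul_left, ← sum_inner, a, sum_smul_sub_centerMass hw,
        inner_zero_left]
    simp only [inner_sub_right, mul_sub, sum_sub_distrib, h0, sub_zero]
  have hpt : ∀ i, w i * ‖(x + t • y) i - s.centerMass w (x + t • y)‖ ^ 2
      = w i * ‖a i‖ ^ 2 + t * (2 * (w i * ⟪a i, y i - s.centerMass w y⟫))
        + t ^ 2 * (w i * ‖y i - s.centerMass w y‖ ^ 2) := by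
    intro i
    have hdev : (x + t • y) i - (s.centerMass w x + t • s.centerMass w y)
        = a i + t • (y i - s.centerMass w y) := by
      simp only [a, Pi.add_apply, Pi.smul_apply, smul_sub]; abel
    rw [centerMass_add_smul, hdev, norm_add_sq_real, norm_smul, real_inner_smul_right, mul_pow,
      Real.norm_eq_abs, sq_abs]
    ring
  simp only [weightedVar, hpt, sum_add_distrib, ← mul_sum, hcross, a]

end Finset

section Clusters

open Finset

variable {n k d : ℕ} (c : Fin n → Fin k) (γ : Fin n → ℝ) (α : Fin k → ℝ)

lemma mem_clSet_self (i : Fin n) : i ∈ clSet c (c i) := by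
  simp [clSet]

lemma sum_sum_clSet {M : Type*} [AddCommMonoid M] (g : Fin k → Fin n → M) :
    ∑ j, ∑ i ∈ clSet c j, g j i = ∑ i, g (c i) i := by
  rw [← sum_fiberwise univ c fun i => g (c i) i]
  refine sum_congr rfl fun j _ => sum_congr rfl fun i hi => ?_
  rw [(mem_filter.mp hi).2]

lemma clAvg_eq_centerMass (j : Fin k) (θ : X n d) :
    clAvg c γ j θ = (clSet c j).centerMass γ θ := rfl

lemma glAvg_eq_centerMass (θ : X n d) :
    glAvg c γ α θ = univ.centerMass (fun i => α (c i) * γ i) θ := by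
  simp only [glAvg, centerMass, sum_sum_clSet c fun j i => α j * γ i,
    sum_sum_clSet c fun j i => (α j * γ i) • θ i]

lemma psi_eq_weightedVar (j : Fin k) (θ : X n d) :
    psi c γ j θ = 1 / 2 * (clSet c j).weightedVar γ θ := rfl

lemma phi_eq_weightedVar (θ : X n d) :
    phi c γ α θ = 1 / 2 * univ.weightedVar (fun i => α (c i) * γ i) θ := by
  simp only [phi, weightedVar, ← glAvg_eq_centerMass, mul_sum, mul_assoc]
  exact sum_sum_clSet c fun j i => 1 / 2 * (α j * (γ i * ‖θ i - glAvg c γ α θ‖ ^ 2))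

def regularizer (θ : X n d) : ℝ :=
  ∑ j, (1 - α j) * psi c γ j θ + phi c γ α θ

lemma objF_eq_add_regularizer (f : Fin n → E d → ℝ) (θ : X n d) :
    objF c γ α f θ = ∑ i, f i (θ i) + regularizer c γ α θ :=
  add_assoc _ _ _

lemma two_mul_regularizer (θ : X n d) :
    2 * regularizer c γ α θ = ∑ i, γ i * (α (c i) * ‖θ i - glAvg c γ α θ‖ ^ 2
      + (1 - α (c i)) * ‖θ i - clAvg c γ (c i) θ‖ ^ 2) := by
  simp only [regularizer, phi_eq_weightedVar, psi, weightedVar, ← glAvg_eq_centerMass, mul_add,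
    mul_sum, sum_add_distrib]
  rw [sum_sum_clSet c fun j i => 2 * ((1 - α j) * (1 / 2 * (γ i * ‖θ i - clAvg c γ j θ‖ ^ 2)))]
  rw [add_comm]
  congr 1 <;> refine sum_congr rfl fun i _ => by ring

lemma regularizer_add_smul (hW : ∀ j, ∑ i ∈ clSet c j, γ i ≠ 0)
    (hWg : ∑ i, α (c i) * γ i ≠ 0) (x y : X n d) :
    ∃ C, ∀ t : ℝ, regularizer c γ α (x + t • y)
      = regularizer c γ α x + t * C + t ^ 2 * regularizer c γ α y := by
  set Sψ := fun j => ∑ i ∈ clSet c j, γ i * ⟪x i - clAvg c γ j x, y i⟫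
  set Sφ := ∑ i, α (c i) * γ i * ⟪x i - glAvg c γ α x, y i⟫
  refine ⟨∑ j, (1 - α j) * Sψ j + Sφ, fun t => ?_⟩
  have hψ : ∀ j, (1 - α j) * psi c γ j (x + t • y) = (1 - α j) * psi c γ j x
      + t * ((1 - α j) * Sψ j) + t ^ 2 * ((1 - α j) * psi c γ j y) := by
    intro j
    simp only [psi_eq_weightedVar, WithLp.ofLp_add, WithLp.ofLp_smul,
      weightedVar_add_smul (hW j), Sψ, clAvg_eq_centerMass]
    ring
  have hφ : phi c γ α (x + t • y) = phi c γ α x + t * Sφ + t ^ 2 * phi c γ α y := by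
    simp only [phi_eq_weightedVar, WithLp.ofLp_add, WithLp.ofLp_smul,
      weightedVar_add_smul hWg, Sφ, glAvg_eq_centerMass]
    ring
  simp only [regularizer, hψ, hφ, sum_add_distrib, ← mul_sum]
  ring

/-- At a minimizer the linear term of the expansion of `objF` around it vanishes. -/
lemma objF_sub_objF_of_isMin {f : Fin n → E d → ℝ} (hdiff : ∀ i, Differentiable ℝ (f i))
    (hW : ∀ j, ∑ i ∈ clSet c j, γ i ≠ 0) (hWg : ∑ i, α (c i) * γ i ≠ 0) {θstar : X n d}
    (hmin : ∀ θ, objF c γ α f θstar ≤ objF c γ α f θ) (θ : X n d) :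
    objF c γ α f θ - objF c γ α f θstar
      = ∑ i, bregman (f i) (θ i) (θstar i) + regularizer c γ α (θ - θstar) := by
  set Δ := θ - θstar
  obtain ⟨C, hC⟩ := regularizer_add_smul c γ α hW hWg θstar Δ
  set q : ℝ → ℝ := fun t => ∑ i, f i (θstar i + t • Δ i)
    + (regularizer c γ α θstar + t * C + t ^ 2 * regularizer c γ α Δ)
  have hq : ∀ t, objF c γ α f (θstar + t • Δ) = q t := fun t => by
    rw [objF_eq_add_regularizer, hC]; rfl
  have hderiv : HasDerivAt q (∑ i, ⟪gradient (f i) (θstar i), Δ i⟫ + C) 0 := by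
    have hsum := HasDerivAt.fun_sum (u := univ) fun i _ =>
      hasDerivAt_comp_line (hdiff i) (θstar i) (Δ i) 0
    refine (hsum.add ((((hasDerivAt_id (0 : ℝ)).mul_const C).const_add _).add
      ((hasDerivAt_pow 2 (0 : ℝ)).mul_const _))).congr_deriv ?_
    simp
  have hopt : ∑ i, ⟪gradient (f i) (θstar i), Δ i⟫ + C = 0 := by
    refine IsLocalMin.hasDerivAt_eq_zero (Filter.Eventually.of_forall fun t => ?_) hderiv
    simpa [← hq] using hmin (θstar + t • Δ)
  have h1 := hq 1
  have h0 := hq 0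
  simp only [q, one_smul, zero_smul, add_zero, zero_mul, one_mul, one_pow, zero_pow two_ne_zero,
    Δ, add_sub_cancel, WithLp.ofLp_sub, Pi.sub_apply] at h0 h1 hopt
  rw [h0, h1]
  simp only [bregman, sum_sub_distrib, Δ]
  linarith

end Clusters

section Expectation

open Finset

lemma sum_prod_mul_apply_eq_sum {ι β : Type*} [Fintype ι] [DecidableEq ι] [Fintype β]
    (w : ι → β → ℝ) (hw : ∀ j, ∑ b, w j b = 1) (j0 : ι) (g : β → ℝ) :
    ∑ ξ : ι → β, (∏ j, w j (ξ j)) * g (ξ j0) = ∑ b, w j0 b * g b := by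
  have hfactor : ∀ ξ : ι → β, (∏ j, w j (ξ j)) * g (ξ j0)
      = ∏ j, w j (ξ j) * (if j = j0 then g (ξ j) else 1) := fun ξ => by
    rw [prod_mul_distrib, prod_ite_eq' univ j0 fun j => g (ξ j)]
    simp
  simp_rw [hfactor]
  rw [← Fintype.prod_sum fun j b => w j b * (if j = j0 then g b else 1),
    Fintype.prod_eq_mul_prod_compl j0, prod_eq_one fun j hj => ?_]
  · simp
  · simpa [show j ≠ j0 by simpa using hj] using hw j

lemma sum_wt_mul {k : ℕ} (p0 : ℝ) (p : Fin k → ℝ) (j0 : Fin k) (G : Bool → Bool → ℝ) :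
    ∑ ω : Outcome k, wt p0 p ω * G ω.1 (ω.2 j0)
      = p0 * (p j0 * G true true + (1 - p j0) * G true false)
        + (1 - p0) * (p j0 * G false true + (1 - p j0) * G false false) := by
  have hmarg : ∀ b, ∑ ξ : Fin k → Bool, (∏ j, if ξ j then p j else 1 - p j) * G b (ξ j0)
      = p j0 * G b true + (1 - p j0) * G b false := fun b => by
    rw [sum_prod_mul_apply_eq_sum (fun j (t : Bool) => if t then p j else 1 - p j)
      (fun j => by simp) j0 (G b)]
    simp
  simp only [Fintype.sum_prod_type, Fintype.sum_bool, wt, if_true, Bool.false_eq_true, if_false,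
    mul_assoc, ← mul_sum, hmarg]

variable {n k : ℕ} {V : Type*} [NormedAddCommGroup V]

lemma sum_wt_mul_norm_sq_branch (p0 : ℝ) (p : Fin k → ℝ) (c : Fin n → Fin k)
    (u v w : Fin n → V) :
    ∑ ω : Outcome k, wt p0 p ω * ‖(WithLp.toLp 2 fun i =>
        if ω.1 then u i else if ω.2 (c i) then v i else w i : PiLp 2 fun _ : Fin n => V)‖ ^ 2
      = ∑ i, (p0 * ‖u i‖ ^ 2 + (1 - p0) * (p (c i) * ‖v i‖ ^ 2 + (1 - p (c i)) * ‖w i‖ ^ 2)) := by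
  simp only [PiLp.norm_sq_eq_of_L2, mul_sum]
  rw [sum_comm]
  refine sum_congr rfl fun i _ => ?_
  have := sum_wt_mul p0 p (c i) fun b t => ‖if b then u i else if t then v i else w i‖ ^ 2
  rw [this]
  simp only [if_true, Bool.false_eq_true, if_false]
  ring

end Expectation

section Oracle

open Finset

variable {n k d : ℕ} (c : Fin n → Fin k) (γ : Fin n → ℝ) (α : Fin k → ℝ)

lemma clAvg_sub (j : Fin k) (θ θ' : X n d) :
    clAvg c γ j (θ - θ') = clAvg c γ j θ - clAvg c γ j θ' := by
  simp only [clAvg_eq_centerMass, WithLp.ofLp_sub, centerMass_sub]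

lemma glAvg_sub (θ θ' : X n d) :
    glAvg c γ α (θ - θ') = glAvg c γ α θ - glAvg c γ α θ' := by
  simp only [glAvg_eq_centerMass, WithLp.ofLp_sub, centerMass_sub]

lemma Orc_sub_Orc (τ : Fin k → ℝ) (p0 : ℝ) (p : Fin k → ℝ) (f : Fin n → E d → ℝ)
    (θ θ' : X n d) (ω : Outcome k) :
    Orc c γ α τ p0 p f θ ω - Orc c γ α τ p0 p f θ' ω = WithLp.toLp 2 fun i =>
      if ω.1 then
        (γ i * α (c i) / p0) • ((θ - θ') i - glAvg c γ α (θ - θ'))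
          + (γ i * τ (c i) * (1 - α (c i)) / p0) • ((θ - θ') i - clAvg c γ (c i) (θ - θ'))
      else if ω.2 (c i) then
        (γ i * (1 - τ (c i)) * (1 - α (c i)) / ((1 - p0) * p (c i)))
          • ((θ - θ') i - clAvg c γ (c i) (θ - θ'))
      else
        (1 / ((1 - p0) * (1 - p (c i)))) • (gradient (f i) (θ i) - gradient (f i) (θ' i)) := by
  ext i : 1
  simp only [Orc, WithLp.ofLp_sub, Pi.sub_apply, clAvg_sub, glAvg_sub]
  split_ifs <;> simp only [smul_sub] <;> abel

end Oracle

section ClientBound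

lemma norm_smul_add_smul_sq_le {V : Type*} [NormedAddCommGroup V] [NormedSpace ℝ V]
    (a b : ℝ) (x y : V) :
    ‖a • x + b • y‖ ^ 2 ≤ 2 * a ^ 2 * ‖x‖ ^ 2 + 2 * b ^ 2 * ‖y‖ ^ 2 := by
  have h := pow_le_pow_left₀ (norm_nonneg _) (norm_add_le (a • x) (b • y)) 2
  have h2 := add_sq_le (a := ‖a • x‖) (b := ‖b • y‖)
  simp only [norm_smul, mul_pow, Real.norm_eq_abs, sq_abs] at h h2
  linarith

/-- The choice `τ = p0 / (p0 + 2 (1 - p0) q)` minimizes `2 τ² / p0 + (1 - τ)² / ((1 - p0) q)`,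
with minimum value `2 / (p0 + 2 (1 - p0) q)`. -/
lemma tau_sq_combination_eq {p0 q τ : ℝ} (hp0 : p0 ∈ Set.Ioo (0 : ℝ) 1) (hq : 0 < q)
    (hτ : τ = p0 / (p0 + 2 * (1 - p0) * q)) (x : ℝ) :
    p0 * (2 * (τ * x / p0) ^ 2) + (1 - p0) * q * ((1 - τ) * x / ((1 - p0) * q)) ^ 2
      = 2 / (p0 + 2 * (1 - p0) * q) * x ^ 2 := by
  obtain ⟨h0, h1⟩ := hp0
  have hs : 0 < p0 + 2 * (1 - p0) * q := by nlinarith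
  have : 1 - p0 ≠ 0 := by linarith
  subst hτ
  field_simp
  ring

variable {V : Type*} [NormedAddCommGroup V] [InnerProductSpace ℝ V]

lemma client_expectation_le {p0 q a g τ L M D : ℝ} (hp0 : p0 ∈ Set.Ioo (0 : ℝ) 1)
    (hq : q ∈ Set.Ioo (0 : ℝ) 1) (hg : 0 < g) (ha : a ∈ Set.Ioc (0 : ℝ) 1)
    (hτ : τ = p0 / (p0 + 2 * (1 - p0) * q))
    (hMglobal : 2 / p0 * (a * g) ≤ M)
    (hMcluster : 2 * (1 - a) * g / (p0 + 2 * (1 - p0) * q) ≤ M)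
    (hMlocal : L / ((1 - p0) * (1 - q)) ≤ M)
    (hD : 0 ≤ D) (A B G : V) (hG : ‖G‖ ^ 2 ≤ 2 * L * D) :
    p0 * ‖(g * a / p0) • A + (g * τ * (1 - a) / p0) • B‖ ^ 2
      + (1 - p0) * (q * ‖(g * (1 - τ) * (1 - a) / ((1 - p0) * q)) • B‖ ^ 2
        + (1 - q) * ‖(1 / ((1 - p0) * (1 - q))) • G‖ ^ 2)
      ≤ M * (g * (a * ‖A‖ ^ 2 + (1 - a) * ‖B‖ ^ 2) + 2 * D) := by
  obtain ⟨hp0, hp1⟩ := hp0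
  obtain ⟨hq0, hq1⟩ := hq
  obtain ⟨ha0, ha1⟩ := ha
  have hsplit := norm_smul_add_smul_sq_le (g * a / p0) (g * τ * (1 - a) / p0) A B
  simp only [norm_smul, mul_pow, Real.norm_eq_abs, sq_abs]
  have hglobal : p0 * (2 * (g * a / p0) ^ 2) = 2 / p0 * (a * g) * (a * g) := by
    field_simp
  have hcluster : p0 * (2 * (g * τ * (1 - a) / p0) ^ 2)
      + (1 - p0) * q * (g * (1 - τ) * (1 - a) / ((1 - p0) * q)) ^ 2
      = 2 * (1 - a) * g / (p0 + 2 * (1 - p0) * q) * ((1 - a) * g) := by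
    linear_combination tau_sq_combination_eq ⟨hp0, hp1⟩ hq0 hτ (g * (1 - a))
  have hlocal : (1 - p0) * ((1 - q) * ((1 / ((1 - p0) * (1 - q))) ^ 2 * ‖G‖ ^ 2))
      ≤ 2 * (L / ((1 - p0) * (1 - q))) * D := by
    have hpos : 0 < (1 - p0) * (1 - q) := mul_pos (by linarith) (by linarith)
    calc (1 - p0) * ((1 - q) * ((1 / ((1 - p0) * (1 - q))) ^ 2 * ‖G‖ ^ 2))
        = ‖G‖ ^ 2 / ((1 - p0) * (1 - q)) := by field_simp
      _ ≤ 2 * L * D / ((1 - p0) * (1 - q)) := by gcongr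
      _ = 2 * (L / ((1 - p0) * (1 - q))) * D := by ring
  have hA := mul_le_mul_of_nonneg_right hMglobal (by positivity : 0 ≤ a * g * ‖A‖ ^ 2)
  have hB := mul_le_mul_of_nonneg_right hMcluster
    (mul_nonneg (mul_nonneg (sub_nonneg.mpr ha1) hg.le) (sq_nonneg ‖B‖))
  have hC := mul_le_mul_of_nonneg_right hMlocal (by positivity : 0 ≤ 2 * D)
  nlinarith [sq_nonneg ‖A‖, sq_nonneg ‖B‖]

end ClientBound

section ExpectedSmoothnessConstant

open Finset

variable {n k : ℕ} (hk : 0 < k) (c : Fin n → Fin k) (hc : ∀ j, (clSet c j).Nonempty)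
  (γ : Fin n → ℝ) (α : Fin k → ℝ) (L p0 : ℝ) (p : Fin k → ℝ)

lemma global_coeff_le_esL (hp0 : 0 < p0) (i : Fin n) :
    2 / p0 * (α (c i) * γ i) ≤ esL hk c hc γ α L p0 p := by
  refine le_max_of_le_left (le_max_of_le_left (mul_le_mul_of_nonneg_left ?_ (by positivity)))
  exact (le_sup' (fun i' => α (c i) * γ i') (mem_clSet_self c i)).trans
    (le_sup' (fun j => (clSet c j).sup' (hc j) fun i => α j * γ i) (mem_univ (c i)))

lemma cluster_coeff_le_esL (hα : ∀ j, α j ≤ 1) (hp0 : p0 ∈ Set.Ioo (0 : ℝ) 1)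
    (hp : ∀ j, 0 ≤ p j) (i : Fin n) :
    2 * (1 - α (c i)) * γ i / (p0 + 2 * (1 - p0) * p (c i)) ≤ esL hk c hc γ α L p0 p := by
  refine le_max_of_le_left (le_max_of_le_right (le_trans ?_
    (le_sup' (fun j => 2 * (1 - α j) * ((clSet c j).sup' (hc j) γ)
      / (p0 + 2 * (1 - p0) * p j)) (mem_univ (c i)))))
  have hs : 0 ≤ p0 + 2 * (1 - p0) * p (c i) := by nlinarith [hp0.1, hp0.2, hp (c i)]
  have : 0 ≤ 1 - α (c i) := sub_nonneg.mpr (hα _)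
  gcongr
  exact le_sup' γ (mem_clSet_self c i)

lemma local_coeff_le_esL (hL : 0 ≤ L) (hp0 : p0 < 1) (i : Fin n) :
    L / ((1 - p0) * (1 - p (c i))) ≤ esL hk c hc γ α L p0 p := by
  refine le_max_of_le_right ?_
  rw [div_mul_eq_div_div, div_eq_mul_one_div _ (1 - p (c i))]
  exact mul_le_mul_of_nonneg_left (le_sup' (fun j => 1 / (1 - p j)) (mem_univ (c i)))
    (div_nonneg hL (by linarith))

end ExpectedSmoothnessConstant

/-- expected smoothness of the Async-L2GD oracle:
E‖G(θ) − G(θ*)‖² ≤ 2𝓛(F(θ) − F(θ*)). -/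
theorem oracle_expected_smoothness {n k d : ℕ} (hk : 0 < k)
    (c : Fin n → Fin k) (hc : ∀ j, (clSet c j).Nonempty)
    (γ : Fin n → ℝ) (hγ : ∀ i, 0 < γ i)
    (α : Fin k → ℝ) (hα : ∀ j, α j ∈ Set.Ioc (0 : ℝ) 1)
    (f : Fin n → E d → ℝ) (μ L : ℝ) (hμ : 0 < μ) (hL : 0 < L)
    (hdiff : ∀ i, Differentiable ℝ (f i))
    (hsc : ∀ i, ConvexOn ℝ Set.univ (fun x => f i x - μ / 2 * ‖x‖ ^ 2))
    (hsm : ∀ i, ∀ x y, ‖gradient (f i) x - gradient (f i) y‖ ≤ L * ‖x - y‖)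
    (p0 : ℝ) (hp0 : p0 ∈ Set.Ioo (0 : ℝ) 1)
    (p : Fin k → ℝ) (hp : ∀ j, p j ∈ Set.Ioo (0 : ℝ) 1)
    (τ : Fin k → ℝ) (hτ : ∀ j, τ j = p0 / (p0 + 2 * (1 - p0) * p j))
    (θstar : X n d) (hmin : ∀ θ, objF c γ α f θstar ≤ objF c γ α f θ) :
    ∀ θ : X n d,
      ∑ ω : Outcome k, wt p0 p ω *
          ‖Orc c γ α τ p0 p f θ ω - Orc c γ α τ p0 p f θstar ω‖ ^ 2
        ≤ 2 * esL hk c hc γ α L p0 p * (objF c γ α f θ - objF c γ α f θstar) := by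
  intro θ
  have hW : ∀ j, ∑ i ∈ clSet c j, γ i ≠ 0 := fun j =>
    (Finset.sum_pos (fun i _ => hγ i) (hc j)).ne'
  have hWg : ∑ i, α (c i) * γ i ≠ 0 := by
    obtain ⟨i, -⟩ := hc ⟨0, hk⟩
    exact (Finset.sum_pos (fun i _ => mul_pos (hα _).1 (hγ i)) ⟨i, Finset.mem_univ i⟩).ne'
  have hconv : ∀ i, ConvexOn ℝ Set.univ (f i) := fun i =>
    (strongConvexOn_iff_convex.mpr (hsc i)).convexOn fun r => by positivity
  simp only [Orc_sub_Orc, sum_wt_mul_norm_sq_branch,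
    objF_sub_objF_of_isMin c γ α hdiff hW hWg hmin]
  set Δ := θ - θstar
  calc _ ≤ ∑ i, esL hk c hc γ α L p0 p * (γ i * (α (c i) * ‖Δ i - glAvg c γ α Δ‖ ^ 2
          + (1 - α (c i)) * ‖Δ i - clAvg c γ (c i) Δ‖ ^ 2) + 2 * bregman (f i) (θ i) (θstar i)) :=
        Finset.sum_le_sum fun i _ =>
          client_expectation_le hp0 (hp (c i)) (hγ i) (hα (c i)) (hτ (c i))
            (global_coeff_le_esL hk c hc γ α L p0 p hp0.1 i)
            (cluster_coeff_le_esL hk c hc γ α L p0 p (fun j => (hα j).2) hp0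
              (fun j => (hp j).1.le) i)
            (local_coeff_le_esL hk c hc γ α L p0 p hL.le hp0.2 i)
            ((hconv i).bregman_nonneg (hdiff i) _ _) _ _ _
            ((hconv i).norm_sub_gradient_sq_le_bregman (hdiff i) hL (hsm i) _ _)
    _ = _ := by
      rw [← Finset.mul_sum, Finset.sum_add_distrib, ← two_mul_regularizer, ← Finset.mul_sum]
      ring
end
end
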